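/- Let (â_{n,·})_{n∈ℕ} be random elements of C[0,1] on a probability space, let a_{n,t} > 0 (for n ∈ ℕ, t ∈ [0,1]) be deterministic positive scaling constants, let A be a random element of C[0,1], and let (λ_n) be a positive bounded sequence. Assume (i) sup_{t∈[0,1]} |λ_n^{−1}(â_{n,t}/a_{n,t} − 1) − A_t| →(P) 0 as n → ∞, and (ii) sup_{|s−t|≤δ_n} |a_{n,s}/a_{n,t} − 1| = o(λ_n). Then the linearly interpolated estimator â*_{n,t} := ⟨â_{n,·}⟩_{n,t} satisfies sup_{t∈[0,1]} |λ_n^{−1}(â*_{n,t}/a_{n,t} − 1) − A_t| →(P) 0. -/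

import Mathlib

open MeasureTheory Filter Topology Set
open scoped Classical

/-- Piecewise linear interpolation of `z` on the grid `t 1 < t 2 < … < t jn`. -/
noncomputable def linInterp (jn : ℕ) (t : ℕ → ℝ) (z : ℝ → ℝ) (x : ℝ) : ℝ :=
  if x ≤ t 1 then z (t 1)
  else if h : ∃ j, 2 ≤ j ∧ j ≤ jn ∧ t (j - 1) < x ∧ x ≤ t j then
    ((t (Nat.find h) - x) * z (t (Nat.find h - 1))
        + (x - t (Nat.find h - 1)) * z (t (Nat.find h)))
      / (t (Nat.find h) - t (Nat.find h - 1))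
  else z (t jn)

/-!
At a point `s` the interpolant is a convex combination of the values of `â` at two grid nodes
within the mesh `δₙ` of `s`, so it suffices to bound, for such a node `u`, the standardized error
of `â_{n,u}` relative to `a_{n,s}`. With `ρ = a_{n,u} / a_{n,s}` and
`Eₙ(u) = λₙ⁻¹(â_{n,u}/a_{n,u} - 1) - A_u`, that error is
`(ρ - 1)/λₙ + ρ Eₙ(u) + (ρ - 1) A_u + (A_u - A_s)`: the first and third terms are small by (ii)
and the boundedness of `λₙ` and of `A`, the second by (i), the last by the uniform continuity of
the paths of `A` at scale `δₙ`.

`A` need not be measurable, so boundedness and uniform continuity of its paths hold only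
pointwise in `ω`. They are transferred to outer probability through a measurable approximant
`λₘ⁻¹(â_m/a_m - 1)`, evaluated at rational points only: the corresponding events form a
decreasing sequence of measurable sets whose intersection lies in the small event where the
approximant is far from `A`, and continuity from above applies.
-/

open scoped ENNReal

theorem Icc_subset_of_isClosed_of_forall_rat {a b : ℝ} (hab : a < b) {C : Set ℝ}
    (hC : IsClosed C) (h : ∀ q : ℚ, (q : ℝ) ∈ Icc a b → (q : ℝ) ∈ C) : Icc a b ⊆ C := by
  rw [← closure_Ioo hab.ne]
  refine closure_minimal (fun x hx => ?_) hC
  refine closure_minimal ?_ hC (Rat.denseRange_cast.open_subset_closure_inter isOpen_Ioo hx)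
  rintro _ ⟨hq, q, rfl⟩
  exact h q (Ioo_subset_Icc_self hq)

namespace ContinuousOn

variable {f : ℝ → ℝ} {a b M : ℝ}

theorem abs_le_of_forall_rat (hab : a < b) (hf : ContinuousOn f (Icc a b))
    (h : ∀ q : ℚ, (q : ℝ) ∈ Icc a b → |f q| ≤ M) : ∀ x ∈ Icc a b, |f x| ≤ M := by
  have hC : IsClosed (Icc a b ∩ f ⁻¹' {y | |y| ≤ M}) :=
    hf.preimage_isClosed_of_isClosed isClosed_Icc (isClosed_le continuous_abs continuous_const)
  exact fun x hx => (Icc_subset_of_isClosed_of_forall_rat hab hC (fun q hq => ⟨hq, h q hq⟩) hx).2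

theorem abs_sub_le_of_forall_rat_left (hab : a < b) (hf : ContinuousOn f (Icc a b)) {d y : ℝ}
    (h : ∀ p : ℚ, (p : ℝ) ∈ Icc a b → |(p : ℝ) - y| < d → |f p - f y| ≤ M) :
    ∀ x ∈ Icc a b, |x - y| < d → |f x - f y| ≤ M := by
  have hC : IsClosed ({x | d ≤ |x - y|} ∪ Icc a b ∩ (fun x => f x - f y) ⁻¹' {z | |z| ≤ M}) :=
    (isClosed_le continuous_const (continuous_abs.comp (continuous_sub_right y))).union
      ((hf.sub continuousOn_const).preimage_isClosed_of_isClosed isClosed_Icc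
        (isClosed_le continuous_abs continuous_const))
  intro x hx hxy
  refine ((Icc_subset_of_isClosed_of_forall_rat hab hC (fun p hp => ?_) hx).resolve_left
    (not_le.2 hxy)).2
  by_cases hpy : |(p : ℝ) - y| < d
  · exact Or.inr ⟨hp, h p hp hpy⟩
  · exact Or.inl (not_lt.1 hpy)

theorem abs_sub_le_of_forall_rat (hab : a < b) (hf : ContinuousOn f (Icc a b)) {d : ℝ}
    (h : ∀ p q : ℚ, (p : ℝ) ∈ Icc a b → (q : ℝ) ∈ Icc a b → |(p : ℝ) - q| < d →
      |f p - f q| ≤ M) :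
    ∀ x ∈ Icc a b, ∀ y ∈ Icc a b, |x - y| < d → |f x - f y| ≤ M := by
  have hrat (q : ℚ) (hq : (q : ℝ) ∈ Icc a b) :=
    hf.abs_sub_le_of_forall_rat_left hab fun p hp => h p q hp hq
  intro x hx y hy
  refine hf.abs_sub_le_of_forall_rat_left hab (fun q hq hqy => ?_) x hx
  rw [abs_sub_comm] at hqy ⊢
  exact hrat q hq y hy hqy

end ContinuousOn

theorem tendsto_nhds_zero_of_forall_eventually_le_add {ι : Type*} {l : Filter ι} {f : ι → ℝ≥0∞}
    (h : ∀ θ > 0, ∃ g : ι → ℝ≥0∞, Tendsto g l (𝓝 0) ∧ ∀ᶠ i in l, f i ≤ g i + θ) :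
    Tendsto f l (𝓝 0) := by
  rw [ENNReal.tendsto_nhds_zero]
  intro θ hθ
  obtain ⟨g, hg, hfg⟩ := h (θ / 2) (ENNReal.half_pos hθ.ne')
  filter_upwards [hfg, ENNReal.tendsto_nhds_zero.1 hg (θ / 2) (ENNReal.half_pos hθ.ne')]
    with i hfi hgi
  calc f i ≤ g i + θ / 2 := hfi
    _ ≤ θ / 2 + θ / 2 := by gcongr
    _ = θ := ENNReal.add_halves θ

section Approximation

variable {Ω : Type*} [MeasurableSpace Ω] {P : Measure Ω} [IsFiniteMeasure P]

theorem eventually_measure_lt_of_antitone {S : ℕ → Set Ω} (hS : ∀ k, MeasurableSet (S k))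
    (hanti : Antitone S) {B : Set Ω} (hB : ⋂ k, S k ⊆ B) {θ : ℝ≥0∞} (hθ : P B < θ) :
    ∀ᶠ k in atTop, P (S k) < θ :=
  (tendsto_measure_iInter_atTop (fun k => (hS k).nullMeasurableSet) hanti
    ⟨0, measure_ne_top P _⟩).eventually_lt_const ((measure_mono hB).trans_lt hθ)

variable {X : ℕ → Ω → ℝ → ℝ} {A : Ω → ℝ → ℝ}

theorem tendsto_measure_exists_lt_abs_atTop_of_approx (hX : ∀ m s, Measurable fun ω => X m ω s)
    (hA : ∀ ω, ContinuousOn (A ω) (Icc 0 1))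
    (hXA : ∀ η > 0, Tendsto (fun m => P {ω | ∃ s ∈ Icc (0:ℝ) 1, η < |X m ω s - A ω s|})
      atTop (𝓝 0)) :
    Tendsto (fun K : ℝ => P {ω | ∃ s ∈ Icc (0:ℝ) 1, K < |A ω s|}) atTop (𝓝 0) := by
  rw [ENNReal.tendsto_nhds_zero]
  intro θ hθ
  obtain ⟨m, hm⟩ := ((hXA 1 one_pos).eventually_lt_const (ENNReal.half_pos hθ.ne')).exists
  set B := {ω | ∃ s ∈ Icc (0:ℝ) 1, 1 < |X m ω s - A ω s|}
  set S : ℕ → Set Ω := fun k => {ω | ∃ q : ℚ, (q : ℝ) ∈ Icc (0:ℝ) 1 ∧ (k : ℝ) < |X m ω q|}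
  have hS (k : ℕ) : MeasurableSet (S k) := by
    have := hX m
    measurability
  have hanti : Antitone S := fun k k' hkk' ω ⟨q, hq, hlt⟩ =>
    ⟨q, hq, lt_of_le_of_lt (by exact_mod_cast hkk') hlt⟩
  have hB : ⋂ k, S k ⊆ B := by
    intro ω hω
    by_contra hωB
    obtain ⟨C, hC⟩ := isCompact_Icc.exists_bound_of_continuousOn (hA ω)
    obtain ⟨k, hk⟩ := exists_nat_gt (C + 1)
    obtain ⟨q, hq, hlt⟩ := mem_iInter.1 hω k
    have hXA_q : |X m ω q - A ω q| ≤ 1 := not_lt.1 fun h => hωB ⟨q, hq, h⟩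
    have hA_q : |A ω q| ≤ C := by simpa using hC q hq
    linarith [abs_sub_abs_le_abs_sub (X m ω q) (A ω q)]
  obtain ⟨k, hk⟩ := (eventually_measure_lt_of_antitone hS hanti hB hm).exists
  filter_upwards [eventually_ge_atTop ((k : ℝ) + 1)] with K hK
  calc P _ ≤ P (B ∪ S k) := measure_mono ?_
    _ ≤ P B + P (S k) := measure_union_le _ _
    _ ≤ θ / 2 + θ / 2 := add_le_add hm.le hk.le
    _ = θ := ENNReal.add_halves θ
  rintro ω ⟨s, hs, hKs⟩
  by_contra hω
  simp only [mem_union, not_or] at hω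
  have hrat (q : ℚ) (hq : (q : ℝ) ∈ Icc (0:ℝ) 1) : |A ω q| ≤ k + 1 := by
    have hXA_q : |X m ω q - A ω q| ≤ 1 := not_lt.1 fun h => hω.1 ⟨q, hq, h⟩
    have hX_q : |X m ω q| ≤ k := not_lt.1 fun h => hω.2 ⟨q, hq, h⟩
    linarith [abs_sub_abs_le_abs_sub (A ω q) (X m ω q), abs_sub_comm (X m ω q) (A ω q)]
  linarith [(hA ω).abs_le_of_forall_rat one_pos hrat s hs]

theorem tendsto_measure_modulus_of_approx (hX : ∀ m s, Measurable fun ω => X m ω s)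
    (hA : ∀ ω, ContinuousOn (A ω) (Icc 0 1))
    (hXA : ∀ η > 0, Tendsto (fun m => P {ω | ∃ s ∈ Icc (0:ℝ) 1, η < |X m ω s - A ω s|})
      atTop (𝓝 0)) {η : ℝ} (hη : 0 < η) :
    Tendsto (fun d : ℝ => P {ω | ∃ w ∈ Icc (0:ℝ) 1, ∃ s ∈ Icc (0:ℝ) 1,
      |w - s| ≤ d ∧ η < |A ω w - A ω s|}) (𝓝 0) (𝓝 0) := by
  rw [ENNReal.tendsto_nhds_zero]
  intro θ hθ
  obtain ⟨m, hm⟩ :=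
    ((hXA (η / 5) (by positivity)).eventually_lt_const (ENNReal.half_pos hθ.ne')).exists
  set B := {ω | ∃ s ∈ Icc (0:ℝ) 1, η / 5 < |X m ω s - A ω s|}
  set S : ℕ → Set Ω := fun k => {ω | ∃ p q : ℚ, (p : ℝ) ∈ Icc (0:ℝ) 1 ∧ (q : ℝ) ∈ Icc (0:ℝ) 1 ∧
    |(p : ℝ) - q| < 1 / (k + 1) ∧ 3 * (η / 5) < |X m ω p - X m ω q|}
  have hS (k : ℕ) : MeasurableSet (S k) := by
    have := hX m
    measurability
  have hanti : Antitone S := fun k k' hkk' ω ⟨p, q, hp, hq, hpq, hlt⟩ =>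
    ⟨p, q, hp, hq, hpq.trans_le (Nat.one_div_le_one_div hkk'), hlt⟩
  have hB : ⋂ k, S k ⊆ B := by
    intro ω hω
    by_contra hωB
    obtain ⟨r, hr, hunif⟩ := Metric.uniformContinuousOn_iff.1
      (isCompact_Icc.uniformContinuousOn_of_continuous (hA ω)) (η / 5) (by positivity)
    obtain ⟨k, hk⟩ := exists_nat_one_div_lt hr
    obtain ⟨p, q, hp, hq, hpq, hlt⟩ := mem_iInter.1 hω k
    have hA_pq : |A ω p - A ω q| < η / 5 := hunif p hp q hq ((Real.dist_eq _ _).symm ▸ hpq.trans hk)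
    have hXA_p : |X m ω p - A ω p| ≤ η / 5 := not_lt.1 fun h => hωB ⟨p, hp, h⟩
    have hXA_q : |X m ω q - A ω q| ≤ η / 5 := not_lt.1 fun h => hωB ⟨q, hq, h⟩
    linarith [abs_sub_le (X m ω p) (A ω p) (X m ω q), abs_sub_le (A ω p) (A ω q) (X m ω q),
      abs_sub_comm (A ω q) (X m ω q)]
  obtain ⟨k, hk⟩ := (eventually_measure_lt_of_antitone hS hanti hB hm).exists
  filter_upwards [Iio_mem_nhds (show (0:ℝ) < 1 / (k + 1) by positivity)] with d hd
  calc P _ ≤ P (B ∪ S k) := measure_mono ?_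
    _ ≤ P B + P (S k) := measure_union_le _ _
    _ ≤ θ / 2 + θ / 2 := add_le_add hm.le hk.le
    _ = θ := ENNReal.add_halves θ
  rintro ω ⟨w, hw, s, hs, hws, hlt⟩
  by_contra hω
  simp only [mem_union, not_or] at hω
  have hrat (p q : ℚ) (hp : (p : ℝ) ∈ Icc (0:ℝ) 1) (hq : (q : ℝ) ∈ Icc (0:ℝ) 1)
      (hpq : |(p : ℝ) - q| < 1 / (k + 1)) : |A ω p - A ω q| ≤ η := by
    have hXA_p : |X m ω p - A ω p| ≤ η / 5 := not_lt.1 fun h => hω.1 ⟨p, hp, h⟩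
    have hXA_q : |X m ω q - A ω q| ≤ η / 5 := not_lt.1 fun h => hω.1 ⟨q, hq, h⟩
    have hX_pq : |X m ω p - X m ω q| ≤ 3 * (η / 5) :=
      not_lt.1 fun h => hω.2 ⟨p, q, hp, hq, hpq, h⟩
    linarith [abs_sub_le (A ω p) (X m ω p) (A ω q), abs_sub_le (X m ω p) (X m ω q) (A ω q),
      abs_sub_comm (A ω p) (X m ω p)]
  linarith [(hA ω).abs_sub_le_of_forall_rat one_pos hrat w hw s hs (hws.trans_lt hd)]

end Approximation

theorem abs_standardized_error_le {x au as l Au As ε Λ K : ℝ} (hau : 0 < au) (has : 0 < as)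
    (hl : 0 < l) (hlΛ : l ≤ Λ) (hρ : |au / as - 1| ≤ ε * l)
    (hE : |(x / au - 1) / l - Au| ≤ ε) (hAu : |Au| ≤ K) :
    |(x / as - 1) / l - As| ≤ ε + (1 + ε * Λ) * ε + ε * Λ * K + |Au - As| := by
  set ρ := au / as
  have hΛ : 0 < Λ := hl.trans_le hlΛ
  have hε : 0 ≤ ε := (abs_nonneg _).trans hE
  have hρΛ : |ρ - 1| ≤ ε * Λ := hρ.trans (mul_le_mul_of_nonneg_left hlΛ hε)
  have hid : (x / as - 1) / l - As
      = (ρ - 1) / l + ρ * ((x / au - 1) / l - Au) + (ρ - 1) * Au + (Au - As) := by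
    simp only [ρ]
    field_simp
    ring
  have h1 : |(ρ - 1) / l| ≤ ε := by rwa [abs_div, abs_of_pos hl, div_le_iff₀ hl]
  have h2 : |ρ * ((x / au - 1) / l - Au)| ≤ (1 + ε * Λ) * ε := by
    rw [abs_mul]
    refine mul_le_mul ?_ hE (abs_nonneg _) (by positivity)
    linarith [abs_sub_abs_le_abs_sub ρ 1, abs_one (α := ℝ)]
  have h3 : |(ρ - 1) * Au| ≤ ε * Λ * K := by
    rw [abs_mul]
    exact mul_le_mul hρΛ hAu (abs_nonneg _) ((abs_nonneg _).trans hρΛ)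
  rw [hid]
  refine (abs_add_le _ _).trans (add_le_add ((abs_add_le _ _).trans
    (add_le_add ((abs_add_le _ _).trans (add_le_add h1 h2)) h3)) le_rfl)

theorem abs_convexComb_error_le {x y c l As α M : ℝ} (hα : α ∈ Icc (0:ℝ) 1)
    (hx : |(x / c - 1) / l - As| ≤ M) (hy : |(y / c - 1) / l - As| ≤ M) :
    |((α * x + (1 - α) * y) / c - 1) / l - As| ≤ M := by
  have hid : ((α * x + (1 - α) * y) / c - 1) / l - As
      = α * ((x / c - 1) / l - As) + (1 - α) * ((y / c - 1) / l - As) := by ring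
  rw [hid]
  calc _ ≤ |α * ((x / c - 1) / l - As)| + |(1 - α) * ((y / c - 1) / l - As)| := abs_add_le _ _
    _ = α * |(x / c - 1) / l - As| + (1 - α) * |(y / c - 1) / l - As| := by
      rw [abs_mul, abs_mul, abs_of_nonneg hα.1, abs_of_nonneg (sub_nonneg.2 hα.2)]
    _ ≤ α * M + (1 - α) * M := by gcongr <;> linarith [hα.1, hα.2]
    _ = M := by ring

section Interpolation

variable {jn : ℕ} {t : ℕ → ℝ}

theorem grid_mem_Icc (ht1 : 0 ≤ t 1) (htjn : t jn ≤ 1)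
    (hmono : ∀ j, 1 ≤ j → j < jn → t j < t (j + 1)) {j : ℕ} (hj1 : 1 ≤ j) (hjn : j ≤ jn) :
    t j ∈ Icc (0:ℝ) 1 := by
  have hmon : MonotoneOn t (Icc 1 jn) := monotoneOn_of_le_add_one ordConnected_Icc
    fun i _ hi hi1 => (hmono i hi.1 (Nat.lt_of_succ_le hi1.2)).le
  exact ⟨ht1.trans (hmon ⟨le_rfl, hj1.trans hjn⟩ ⟨hj1, hjn⟩ hj1),
    (hmon ⟨hj1, hjn⟩ ⟨hj1.trans hjn, le_rfl⟩ hjn).trans htjn⟩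

theorem exists_grid_bracket (hjn : 1 ≤ jn) {s : ℝ} (h1 : t 1 < s) (hs : s ≤ t jn) :
    ∃ j, 2 ≤ j ∧ j ≤ jn ∧ t (j - 1) < s ∧ s ≤ t j := by
  have hex : ∃ k, 1 ≤ k ∧ s ≤ t k := ⟨jn, hjn, hs⟩
  obtain ⟨hj1, hjs⟩ := Nat.find_spec hex
  have hj2 : 2 ≤ Nat.find hex := by
    by_contra! h
    rw [show Nat.find hex = 1 by omega] at hjs
    linarith
  refine ⟨Nat.find hex, hj2, Nat.find_min' hex ⟨hjn, hs⟩, not_le.1 fun h => ?_, hjs⟩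
  exact Nat.find_min hex (by omega) ⟨by omega, h⟩

theorem linInterp_eq_convexComb {δ : ℝ} (hjn : 1 ≤ jn) (ht0 : t 0 = 0) (htend : t (jn + 1) = 1)
    (ht1 : 0 ≤ t 1) (htjn : t jn ≤ 1) (hmono : ∀ j, 1 ≤ j → j < jn → t j < t (j + 1))
    (hgap : ∀ j, 1 ≤ j → j ≤ jn + 1 → t j - t (j - 1) ≤ δ) {s : ℝ} (hs : s ∈ Icc (0:ℝ) 1) :
    ∃ u ∈ Icc (0:ℝ) 1, ∃ v ∈ Icc (0:ℝ) 1, |u - s| ≤ δ ∧ |v - s| ≤ δ ∧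
      ∃ α ∈ Icc (0:ℝ) 1, ∀ z : ℝ → ℝ, linInterp jn t z s = α * z u + (1 - α) * z v := by
  have hmem {j : ℕ} (hj1 : 1 ≤ j) (hjn : j ≤ jn) := grid_mem_Icc ht1 htjn hmono hj1 hjn
  by_cases h1 : s ≤ t 1
  · have hgap1 : t 1 - s ≤ δ := by linarith [hgap 1 le_rfl (by omega), hs.1]
    refine ⟨t 1, hmem le_rfl hjn, t 1, hmem le_rfl hjn, ?_, ?_, 1, ⟨zero_le_one, le_rfl⟩,
      fun z => ?_⟩
    · rwa [abs_of_nonneg (by linarith)]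
    · rwa [abs_of_nonneg (by linarith)]
    · simp [linInterp, h1]
  by_cases h2 : ∃ j, 2 ≤ j ∧ j ≤ jn ∧ t (j - 1) < s ∧ s ≤ t j
  · obtain ⟨hj2, hjn', hlt, hle⟩ := Nat.find_spec h2
    have hval (z : ℝ → ℝ) : linInterp jn t z s =
        ((t (Nat.find h2) - s) * z (t (Nat.find h2 - 1))
          + (s - t (Nat.find h2 - 1)) * z (t (Nat.find h2)))
        / (t (Nat.find h2) - t (Nat.find h2 - 1)) := by
      rw [linInterp, if_neg h1, dif_pos h2]
    set j := Nat.find h2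
    have hgapj := hgap j (by omega) (by omega)
    have hpos : 0 < t j - t (j - 1) := by linarith
    refine ⟨t (j - 1), hmem (by omega) (by omega), t j, hmem (by omega) hjn', ?_, ?_,
      (t j - s) / (t j - t (j - 1)), ⟨by positivity, ?_⟩, fun z => ?_⟩
    · rw [abs_of_neg (by linarith)]; linarith
    · rw [abs_of_nonneg (by linarith)]; linarith
    · rw [div_le_one hpos]; linarith
    · rw [hval]
      field_simp
      ring
  · have hlt : t jn < s := not_le.1 fun h => h2 (exists_grid_bracket hjn (not_le.1 h1) h)
    have hgapn : s - t jn ≤ δ := by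
      have := hgap (jn + 1) (by omega) le_rfl
      rw [Nat.add_sub_cancel, htend] at this
      linarith [hs.2]
    refine ⟨t jn, hmem hjn le_rfl, t jn, hmem hjn le_rfl, ?_, ?_, 1, ⟨zero_le_one, le_rfl⟩,
      fun z => ?_⟩
    · rwa [abs_of_neg (by linarith), neg_sub]
    · rwa [abs_of_neg (by linarith), neg_sub]
    · simp [linInterp, h1, h2]

theorem abs_linInterp_error_le {δ : ℝ} (hjn : 1 ≤ jn) (ht0 : t 0 = 0)
    (htend : t (jn + 1) = 1) (ht1 : 0 ≤ t 1) (htjn : t jn ≤ 1)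
    (hmono : ∀ j, 1 ≤ j → j < jn → t j < t (j + 1))
    (hgap : ∀ j, 1 ≤ j → j ≤ jn + 1 → t j - t (j - 1) ≤ δ)
    {z a A : ℝ → ℝ} {l Λ ε K η : ℝ} (ha : ∀ s ∈ Icc (0:ℝ) 1, 0 < a s) (hl : 0 < l) (hlΛ : l ≤ Λ)
    (hsmooth : ∀ s ∈ Icc (0:ℝ) 1, ∀ u ∈ Icc (0:ℝ) 1, |s - u| ≤ δ → |a s / a u - 1| ≤ ε * l)
    (hE : ∀ s ∈ Icc (0:ℝ) 1, |(z s / a s - 1) / l - A s| ≤ ε)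
    (hA : ∀ s ∈ Icc (0:ℝ) 1, |A s| ≤ K)
    (hmod : ∀ w ∈ Icc (0:ℝ) 1, ∀ s ∈ Icc (0:ℝ) 1, |w - s| ≤ δ → |A w - A s| ≤ η)
    {s : ℝ} (hs : s ∈ Icc (0:ℝ) 1) :
    |(linInterp jn t z s / a s - 1) / l - A s| ≤ ε + (1 + ε * Λ) * ε + ε * Λ * K + η := by
  have hnode : ∀ w ∈ Icc (0:ℝ) 1, |w - s| ≤ δ →
      |(z w / a s - 1) / l - A s| ≤ ε + (1 + ε * Λ) * ε + ε * Λ * K + η := fun w hw hws =>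
    (abs_standardized_error_le (ha w hw) (ha s hs) hl hlΛ (hsmooth w hw s hs hws) (hE w hw)
      (hA w hw)).trans (by gcongr; exact hmod w hw s hs hws)
  obtain ⟨u, hu, v, hv, hus, hvs, α, hα, hinterp⟩ :=
    linInterp_eq_convexComb hjn ht0 htend ht1 htjn hmono hgap hs
  rw [hinterp]
  exact abs_convexComb_error_le hα (hnode u hu hus) (hnode v hv hvs)

end Interpolation

theorem exists_pos_error_budget_lt (Λ K : ℝ) {c : ℝ} (hc : 0 < c) :
    ∃ e > 0, e + (1 + e * Λ) * e + e * Λ * K < c := by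
  have hcont : Tendsto (fun e : ℝ => e + (1 + e * Λ) * e + e * Λ * K) (𝓝[>] 0) (𝓝 0) :=
    tendsto_nhdsWithin_of_tendsto_nhds ((by fun_prop : Continuous
      fun e : ℝ => e + (1 + e * Λ) * e + e * Λ * K).tendsto' 0 0 (by ring))
  exact ((hcont.eventually (gt_mem_nhds hc)).and self_mem_nhdsWithin).exists.imp
    fun e he => ⟨he.2, he.1⟩

/-- the linearly interpolated estimator of the scale function
inherits the uniform asymptotic behavior of the original estimator. -/
theorem interpolated_scale_estimator
    {Ω : Type*} [MeasurableSpace Ω] (P : Measure Ω) [IsProbabilityMeasure P]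
    (jn : ℕ → ℕ) (t : ℕ → ℕ → ℝ) (δ : ℕ → ℝ)
    (hjn : ∀ n, 1 ≤ jn n)
    (ht0 : ∀ n, t n 0 = 0) (htend : ∀ n, t n (jn n + 1) = 1)
    (htnonneg : ∀ n, 0 ≤ t n 1) (htle1 : ∀ n, t n (jn n) ≤ 1)
    (htmono : ∀ n j, 1 ≤ j → j < jn n → t n j < t n (j + 1))
    (hδ : ∀ n, δ n = (Finset.Icc 1 (jn n + 1)).sup' ⟨1, Finset.mem_Icc.mpr (by omega)⟩
      (fun j => t n j - t n (j - 1)))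
    (hδ0 : Tendsto δ atTop (𝓝 0))
    (ahat : ℕ → Ω → ℝ → ℝ) (a : ℕ → ℝ → ℝ) (A : Ω → ℝ → ℝ) (lam : ℕ → ℝ)
    (hmeas : ∀ n s, Measurable fun ω => ahat n ω s)
    (hapos : ∀ n, ∀ s ∈ Icc (0:ℝ) 1, 0 < a n s)
    (hA : ∀ ω, ContinuousOn (A ω) (Icc 0 1))
    (hlam_pos : ∀ n, 0 < lam n) (hlam_bdd : ∃ C, ∀ n, lam n ≤ C)
    -- condition (E(λₙ)): uniform convergence in probability of the standardized errors
    (hE : ∀ ε > 0, Tendsto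
      (fun n => P {ω | ∃ s ∈ Icc (0:ℝ) 1, ε < |(ahat n ω s / a n s - 1) / lam n - A ω s|})
      atTop (𝓝 0))
    -- smoothness: sup_{|s-u|≤δₙ} |a_{n,s}/a_{n,u} - 1| = o(λₙ)
    (hsmooth : ∀ ε > 0, ∀ᶠ n in atTop, ∀ s ∈ Icc (0:ℝ) 1, ∀ u ∈ Icc (0:ℝ) 1,
      |s - u| ≤ δ n → |a n s / a n u - 1| ≤ ε * lam n) :
    ∀ ε > 0, Tendsto
      (fun n => P {ω | ∃ s ∈ Icc (0:ℝ) 1,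
        ε < |(linInterp (jn n) (t n) (ahat n ω) s / a n s - 1) / lam n - A ω s|})
      atTop (𝓝 0) := by
  intro ε hε
  obtain ⟨Λ, hΛ⟩ := hlam_bdd
  have hgap (n j : ℕ) (hj1 : 1 ≤ j) (hjn : j ≤ jn n + 1) : t n j - t n (j - 1) ≤ δ n := by
    rw [hδ n]
    exact Finset.le_sup' (fun j => t n j - t n (j - 1)) (Finset.mem_Icc.2 ⟨hj1, hjn⟩)
  have hX (n : ℕ) (s : ℝ) : Measurable fun ω => (ahat n ω s / a n s - 1) / lam n :=
    (((hmeas n s).div_const _).sub_const _).div_const _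
  have hbound := tendsto_measure_exists_lt_abs_atTop_of_approx hX hA hE
  have hmod := (tendsto_measure_modulus_of_approx hX hA hE (half_pos hε)).comp hδ0
  refine tendsto_nhds_zero_of_forall_eventually_le_add fun θ hθ => ?_
  obtain ⟨K, hK⟩ := (ENNReal.tendsto_nhds_zero.1 hbound θ hθ).exists
  obtain ⟨ε₁, hε₁, hsmall⟩ := exists_pos_error_budget_lt Λ K (half_pos hε)
  refine ⟨fun n => P {ω | ∃ s ∈ Icc (0:ℝ) 1, ε₁ < |(ahat n ω s / a n s - 1) / lam n - A ω s|}
      + P {ω | ∃ w ∈ Icc (0:ℝ) 1, ∃ s ∈ Icc (0:ℝ) 1, |w - s| ≤ δ n ∧ ε / 2 < |A ω w - A ω s|},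
    by simpa using (hE ε₁ hε₁).add hmod, ?_⟩
  filter_upwards [hsmooth ε₁ hε₁] with n hn
  refine (measure_mono ?_).trans
    ((measure_union_le _ _).trans (add_le_add (measure_union_le _ _) hK))
  rintro ω ⟨s, hs, hlt⟩
  by_contra hω
  simp only [mem_union, mem_ofPred_eq, not_or, not_exists, not_and, not_lt] at hω
  obtain ⟨⟨hEω, hmodω⟩, hKω⟩ := hω
  have := abs_linInterp_error_le (hjn n) (ht0 n) (htend n) (htnonneg n) (htle1 n) (htmono n)
    (hgap n) (hapos n) (hlam_pos n) (hΛ n) hn hEω hKω hmodω hs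
  linarith
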